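/- If the pitch dynamics satisfy θ''(t) = (φ'(t)·ψ'(t)·(I_z − I_x) + τ(t))/I_y, where the control torque is τ = τ_eq + τ_sw with τ_eq = I_y·(v' − γ(θ' − ᵈθ')) − φ'ψ'(I_z − I_x) and τ_sw = −I_y·(c₁·sg(s) + c₂·s), then the Lyapunov function V(t) = (1/2)s(t)² has derivative V'(t) = −c₁·s(t)·sg(s(t)) − c₂·s(t)² ≤ 0 for all t; hence the pitch angle control system is Lyapunov stable. -/

import Mathlib

/-- The saturated sign function with parameter `ε`. -/
noncomputable def sg (ε x : ℝ) : ℝ :=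
  if x > ε then 1 else if x < -ε then -1 else x / ε

/-!
Along trajectories the sliding surface obeys `s' = γ e' + θ'' − v'`. The equivalent torque
`τ_eq` cancels the gyroscopic coupling and makes `θ'' = v' − γ e'` exactly, so only the
switching torque survives: `s' = −(c₁ sg(s) + c₂ s)`. Hence `V' = s s' = −c₁ s sg(s) − c₂ s²`,
which is nonpositive because `sg` has the sign of its argument.
-/

lemma mul_sg_nonneg {ε : ℝ} (hε : 0 ≤ ε) (x : ℝ) : 0 ≤ x * sg ε x := by
  unfold sg
  split_ifs with hpos hneg
  · linarith
  · linarith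
  · rw [← mul_div_assoc]
    exact div_nonneg (mul_self_nonneg x) hε

lemma HasDerivAt.half_sq {s : ℝ → ℝ} {s' t : ℝ} (hs : HasDerivAt s s' t) :
    HasDerivAt (fun r => (1 / 2 : ℝ) * s r ^ 2) (s t * s') t :=
  ((hs.fun_pow 2).const_mul (1 / 2 : ℝ)).congr_deriv (by ring)

lemma hasDerivAt_slidingSurface {lam γ t : ℝ} {θ dθ e v s : ℝ → ℝ}
    (hθ : Differentiable ℝ θ) (hθ' : Differentiable ℝ (deriv θ))
    (hdθ : Differentiable ℝ dθ) (hdθ' : Differentiable ℝ (deriv dθ))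
    (he : e = fun t => θ t - dθ t)
    (hv : v = fun t => deriv dθ t - lam * e t)
    (hs : s = fun t => γ * e t + (deriv θ t - v t)) :
    HasDerivAt s (γ * (deriv θ t - deriv dθ t) + (deriv (deriv θ) t - deriv v t)) t := by
  have he' : ∀ r, HasDerivAt e (deriv θ r - deriv dθ r) r := fun r => by
    subst he
    exact (hθ r).hasDerivAt.sub (hdθ r).hasDerivAt
  have hv' : HasDerivAt v (deriv v t) t := by
    subst hv
    exact ((hdθ' t).sub ((he' t).differentiableAt.const_mul lam)).hasDerivAt
  subst hs
  exact ((he' t).const_mul γ).add ((hθ' t).hasDerivAt.sub hv')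

theorem pitch_controller_stable_general
    (ε lam γ c₁ c₂ Ix Iy Iz : ℝ) (hε0 : 0 < ε)
    (hc₁ : 0 < c₁) (hc₂ : 0 < c₂) (hIy : Iy ≠ 0)
    (θ dθ φ ψ : ℝ → ℝ)
    (hθ : Differentiable ℝ θ) (hθ' : Differentiable ℝ (deriv θ))
    (hdθ : Differentiable ℝ dθ) (hdθ' : Differentiable ℝ (deriv dθ))
    (e v s tau : ℝ → ℝ)
    (he : e = fun t => θ t - dθ t)
    (hv : v = fun t => deriv dθ t - lam * e t)
    (hs : s = fun t => γ * e t + (deriv θ t - v t))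
    (htau : ∀ t, tau t
        = (Iy * (deriv v t - γ * (deriv θ t - deriv dθ t))
            - deriv φ t * deriv ψ t * (Iz - Ix))
          + (-(Iy * (c₁ * sg ε (s t) + c₂ * s t))))
    (hdyn : ∀ t, deriv (deriv θ) t
        = (deriv φ t * deriv ψ t * (Iz - Ix) + tau t) / Iy) :
    ∀ t, HasDerivAt (fun r => (1 / 2 : ℝ) * s r ^ 2)
        (-(c₁ * s t * sg ε (s t)) - c₂ * s t ^ 2) t ∧
      -(c₁ * s t * sg ε (s t)) - c₂ * s t ^ 2 ≤ 0 := by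
  intro t
  have hclosed : deriv (deriv θ) t
      = deriv v t - γ * (deriv θ t - deriv dθ t) - (c₁ * sg ε (s t) + c₂ * s t) := by
    rw [hdyn t, htau t]
    field_simp
    ring
  have hs' : HasDerivAt s (-(c₁ * sg ε (s t) + c₂ * s t)) t := by
    convert hasDerivAt_slidingSurface (t := t) hθ hθ' hdθ hdθ' he hv hs using 1
    rw [hclosed]
    ring
  refine ⟨hs'.half_sq.congr_deriv (by ring), ?_⟩
  have hsg := mul_nonneg hc₁.le (mul_sg_nonneg hε0.le (s t))
  linarith [mul_nonneg hc₂.le (sq_nonneg (s t))]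

/-- Under the pitch-torque law `τ = τ_eq + τ_sw`, the Lyapunov function
`V = (1/2)s²` has derivative `−c₁·s·sg(s) − c₂·s² ≤ 0`; the pitch angle
control system is Lyapunov stable. -/
theorem pitch_controller_stable
    (ε lam γ c₁ c₂ Ix Iy Iz : ℝ) (hε0 : 0 < ε) (hε1 : ε < 1)
    (hlam : 0 < lam) (hγ : 0 < γ) (hc₁ : 0 < c₁) (hc₂ : 0 < c₂) (hIy : Iy ≠ 0)
    (θ dθ φ ψ : ℝ → ℝ)
    (hθ : Differentiable ℝ θ) (hθ' : Differentiable ℝ (deriv θ))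
    (hdθ : Differentiable ℝ dθ) (hdθ' : Differentiable ℝ (deriv dθ))
    (hφ : Differentiable ℝ φ) (hφ' : Differentiable ℝ (deriv φ))
    (hψ : Differentiable ℝ ψ) (hψ' : Differentiable ℝ (deriv ψ))
    (e v s tau : ℝ → ℝ)
    (he : e = fun t => θ t - dθ t)
    (hv : v = fun t => deriv dθ t - lam * e t)
    (hs : s = fun t => γ * e t + (deriv θ t - v t))
    (htau : ∀ t, tau t
        = (Iy * (deriv v t - γ * (deriv θ t - deriv dθ t))
            - deriv φ t * deriv ψ t * (Iz - Ix))
          + (-(Iy * (c₁ * sg ε (s t) + c₂ * s t))))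
    (hdyn : ∀ t, deriv (deriv θ) t
        = (deriv φ t * deriv ψ t * (Iz - Ix) + tau t) / Iy) :
    ∀ t, HasDerivAt (fun r => (1 / 2 : ℝ) * s r ^ 2)
        (-(c₁ * s t * sg ε (s t)) - c₂ * s t ^ 2) t ∧
      -(c₁ * s t * sg ε (s t)) - c₂ * s t ^ 2 ≤ 0 :=
  pitch_controller_stable_general ε lam γ c₁ c₂ Ix Iy Iz hε0 hc₁ hc₂ hIy θ dθ φ ψ hθ hθ' hdθ hdθ' e
    v s tau he hv hs htau hdyn
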